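/- Hölder bound on trilinear solution count: for finite nonempty sets A, B, C of reals and any nonzero reals σ₁, σ₂, σ₃, the number of triples (a,b,c) ∈ A×B×C with σ₁a + σ₂b + σ₃c = 0 is at most |C|^{3/4}·(d₄⁺(A)·|A|·|B|³)^{1/4}. -/

import Mathlib

open Finset Pointwise BigOperators

noncomputable section

/-- number of pairs (a,b) ∈ A×B with a - b = x -/
def rsub (A B : Finset ℝ) (x : ℝ) : ℕ :=
  ((A ×ˢ B).filter (fun p => p.1 - p.2 = x)).card

/-- number of pairs (a,b) ∈ A×B with a = x*b -/
def rdiv (A B : Finset ℝ) (x : ℝ) : ℕ :=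
  ((A ×ˢ B).filter (fun p => p.1 = x * p.2)).card

/-- additive energy E⁺(A,B) = Σ_x r_{A−B}(x)² -/
def Eplus (A B : Finset ℝ) : ℕ := ∑ x ∈ A - B, (rsub A B x) ^ 2

/-- multiplicative energy E^×(A,B) = Σ_x r_{A/B}(x)² -/
def Etimes (A B : Finset ℝ) : ℕ := ∑ x ∈ A / B, (rdiv A B x) ^ 2

/-- third additive energy -/
def E3plus (A B : Finset ℝ) : ℕ := ∑ x ∈ A - B, (rsub A B x) ^ 3

/-- third multiplicative energy -/
def E3times (A B : Finset ℝ) : ℕ := ∑ x ∈ A / B, (rdiv A B x) ^ 3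

/-- fourth additive energy -/
def E4plus (A B : Finset ℝ) : ℕ := ∑ x ∈ A - B, (rsub A B x) ^ 4

/-- d⁺(A) -/
def dplus (A : Finset ℝ) : ℝ :=
  ⨆ B : {B : Finset ℝ // B.Nonempty}, (E3plus A B.1 : ℝ) / (A.card * (B.1.card : ℝ) ^ 2)

/-- d^×(A) -/
def dtimes (A : Finset ℝ) : ℝ :=
  ⨆ B : {B : Finset ℝ // B.Nonempty}, (E3times A B.1 : ℝ) / (A.card * (B.1.card : ℝ) ^ 2)

/-- d₄⁺(A) -/
def d4plus (A : Finset ℝ) : ℝ :=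
  ⨆ B : {B : Finset ℝ // B.Nonempty}, (E4plus A B.1 : ℝ) / (A.card * (B.1.card : ℝ) ^ 3)

end

/-!
For fixed `c` the equation reads `a - τ b = g c` with `τ = -σ₂/σ₁` and `g c = -(σ₃/σ₁) c`, so the
number of solutions is `∑_{c ∈ C} r_{A - τB}(g c)`. By Hölder its fourth power is at most
`|C|³ ∑_{c ∈ C} r_{A - τB}(g c)⁴`; since `g` is injective this sum is at most `E₄⁺(A, τB)`, which is
at most `d₄⁺(A) |A| |τB|³ = d₄⁺(A) |A| |B|³`.
-/

namespace Finset

theorem card_filter_prod_prod_eq_sum {α β γ : Type*} (A : Finset α) (B : Finset β) (C : Finset γ)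
    (P : α → β → γ → Prop) [∀ a b c, Decidable (P a b c)] :
    #{p ∈ A ×ˢ B ×ˢ C | P p.1 p.2.1 p.2.2} = ∑ c ∈ C, (#{p ∈ A ×ˢ B | P p.1 p.2 c} : ℕ) := by
  simp only [card_filter, sum_product]
  conv_lhs => enter [2, a]; rw [sum_comm]
  rw [sum_comm]

end Finset

section Representations

variable (A B : Finset ℝ)

theorem rsub_le_card_left (x : ℝ) : rsub A B x ≤ #A :=
  card_le_card_of_injOn Prod.fst (fun p hp => (mem_product.1 (mem_filter.1 hp).1).1)
    fun _ hp _ hq hpq => by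
      have hp' := (mem_filter.1 hp).2
      have hq' := (mem_filter.1 hq).2
      exact Prod.ext hpq (by linarith)

theorem rsub_le_card_right (x : ℝ) : rsub A B x ≤ #B :=
  card_le_card_of_injOn Prod.snd (fun p hp => (mem_product.1 (mem_filter.1 hp).1).2)
    fun _ hp _ hq hpq => by
      have hp' := (mem_filter.1 hp).2
      have hq' := (mem_filter.1 hq).2
      exact Prod.ext (by linarith) hpq

theorem rsub_eq_zero_of_notMem {x : ℝ} (hx : x ∉ A - B) : rsub A B x = 0 :=
  card_eq_zero.2 <| filter_eq_empty_iff.2 fun _ hp hpx =>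
    hx (hpx ▸ sub_mem_sub (mem_product.1 hp).1 (mem_product.1 hp).2)

theorem sum_rsub : ∑ x ∈ A - B, rsub A B x = #A * #B := by
  rw [← card_product]
  exact (card_eq_sum_card_fiberwise fun p hp =>
    sub_mem_sub (mem_product.1 hp).1 (mem_product.1 hp).2).symm

theorem card_filter_sub_mul_eq_rsub_image {t : ℝ} (ht : t ≠ 0) (x : ℝ) :
    #{p ∈ A ×ˢ B | p.1 - t * p.2 = x} = rsub A (B.image (t * ·)) x := by
  have hprod : A ×ˢ B.image (t * ·) = (A ×ˢ B).image (Prod.map id (t * ·)) := by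
    rw [prodMap_image_product, image_id]
  have hinj : Function.Injective (Prod.map id (t * ·) : ℝ × ℝ → ℝ × ℝ) :=
    Prod.map_injective.2 ⟨Function.injective_id, mul_right_injective₀ ht⟩
  rw [rsub, hprod, filter_image, card_image_of_injective _ hinj]
  rfl

end Representations

section FourthEnergy

variable (A B : Finset ℝ)

theorem E4plus_le_card_sq_mul_card_pow_three : E4plus A B ≤ #A ^ 2 * #B ^ 3 :=
  calc E4plus A B ≤ ∑ x ∈ A - B, #A * #B ^ 2 * rsub A B x := by
        refine sum_le_sum fun x _ => ?_
        calc rsub A B x ^ 4 = rsub A B x * rsub A B x ^ 2 * rsub A B x := by ring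
          _ ≤ #A * #B ^ 2 * rsub A B x := by
            gcongr
            exacts [rsub_le_card_left A B x, rsub_le_card_right A B x]
    _ = #A ^ 2 * #B ^ 3 := by rw [← mul_sum, sum_rsub]; ring

theorem bddAbove_range_E4plus_div :
    BddAbove (Set.range fun B : {B : Finset ℝ // B.Nonempty} =>
      (E4plus A B.1 : ℝ) / (#A * (#B.1 : ℝ) ^ 3)) := by
  refine ⟨#A, ?_⟩
  rintro _ ⟨B, rfl⟩
  refine div_le_of_le_mul₀ (by positivity) (by positivity) ?_
  calc (E4plus A B.1 : ℝ) ≤ #A ^ 2 * #B.1 ^ 3 := by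
        exact_mod_cast E4plus_le_card_sq_mul_card_pow_three A B.1
    _ = #A * (#A * #B.1 ^ 3) := by ring

theorem E4plus_le_d4plus_mul : (E4plus A B : ℝ) ≤ d4plus A * #A * #B ^ 3 := by
  rcases A.eq_empty_or_nonempty with rfl | hA
  · simp [E4plus]
  rcases B.eq_empty_or_nonempty with rfl | hB
  · simp [E4plus]
  have : (E4plus A B : ℝ) / (#A * #B ^ 3) ≤ d4plus A :=
    le_ciSup (bddAbove_range_E4plus_div A) ⟨B, hB⟩
  rwa [div_le_iff₀ (by positivity), ← mul_assoc] at this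

theorem sum_rsub_comp_pow_four_le_E4plus (C : Finset ℝ) {g : ℝ → ℝ} (hg : Set.InjOn g C) :
    ∑ c ∈ C, rsub A B (g c) ^ 4 ≤ E4plus A B := by
  rw [← sum_image (g := g) (f := fun x => rsub A B x ^ 4) hg]
  refine sum_le_sum_of_ne_zero fun x _ hx => ?_
  by_contra hx'
  exact hx (by rw [rsub_eq_zero_of_notMem A B hx']; rfl)

end FourthEnergy

theorem le_rpow_mul_rpow_of_pow_four_le {S n X : ℝ} (hS : 0 ≤ S) (hn : 0 ≤ n) (hX : 0 ≤ X)
    (h : S ^ 4 ≤ n ^ 3 * X) : S ≤ n ^ ((3:ℝ)/4) * X ^ ((1:ℝ)/4) :=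
  calc S = (S ^ 4) ^ ((1:ℝ)/4) := by
        rw [← Real.rpow_natCast, ← Real.rpow_mul hS]; norm_num
    _ ≤ (n ^ 3 * X) ^ ((1:ℝ)/4) := by gcongr
    _ = n ^ ((3:ℝ)/4) * X ^ ((1:ℝ)/4) := by
        rw [Real.mul_rpow (by positivity) hX, ← Real.rpow_natCast n 3, ← Real.rpow_mul hn]
        norm_num

theorem stmt12_general (A B C : Finset ℝ)
    (σ₁ σ₂ σ₃ : ℝ) (h1 : σ₁ ≠ 0) (h2 : σ₂ ≠ 0) (h3 : σ₃ ≠ 0) :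
    ((((A ×ˢ B ×ˢ C).filter
        (fun p => σ₁ * p.1 + σ₂ * p.2.1 + σ₃ * p.2.2 = 0)).card : ℝ)) ≤
      (C.card : ℝ) ^ ((3:ℝ)/4) *
        (d4plus A * (A.card : ℝ) * (B.card : ℝ) ^ 3) ^ ((1:ℝ)/4) := by
  set τ := -σ₂ / σ₁
  set g : ℝ → ℝ := fun c => -σ₃ / σ₁ * c
  have hτ : τ ≠ 0 := div_ne_zero (neg_ne_zero.2 h2) h1
  have hg : Set.InjOn g C := (mul_right_injective₀ (div_ne_zero (neg_ne_zero.2 h3) h1)).injOn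
  have hcount : #{p ∈ A ×ˢ B ×ˢ C | σ₁ * p.1 + σ₂ * p.2.1 + σ₃ * p.2.2 = 0}
      = ∑ c ∈ C, rsub A (B.image (τ * ·)) (g c) := by
    rw [card_filter_prod_prod_eq_sum A B C fun a b c => σ₁ * a + σ₂ * b + σ₃ * c = 0]
    refine sum_congr rfl fun c _ => ?_
    rw [← card_filter_sub_mul_eq_rsub_image A B hτ]
    congr 1
    refine filter_congr fun p _ => ?_
    simp only [τ, g]
    field_simp
    constructor <;> intro h <;> linarith
  have hE : ∑ c ∈ C, (rsub A (B.image (τ * ·)) (g c) : ℝ) ^ 4 ≤ d4plus A * #A * #B ^ 3 :=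
    calc _ ≤ (E4plus A (B.image (τ * ·)) : ℝ) := by
          exact_mod_cast sum_rsub_comp_pow_four_le_E4plus A _ C hg
      _ ≤ d4plus A * #A * #(B.image (τ * ·)) ^ 3 := E4plus_le_d4plus_mul A _
      _ = d4plus A * #A * #B ^ 3 := by rw [card_image_of_injective _ (mul_right_injective₀ hτ)]
  rw [hcount]
  push_cast
  refine le_rpow_mul_rpow_of_pow_four_le (by positivity) (by positivity)
    ((sum_nonneg fun _ _ => by positivity).trans hE) ?_
  exact (pow_sum_le_card_mul_sum_pow (fun _ _ => by positivity) 3).trans (by gcongr)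

theorem stmt12 (A B C : Finset ℝ) (hA : A.Nonempty) (hB : B.Nonempty) (hC : C.Nonempty)
    (σ₁ σ₂ σ₃ : ℝ) (h1 : σ₁ ≠ 0) (h2 : σ₂ ≠ 0) (h3 : σ₃ ≠ 0) :
    ((((A ×ˢ B ×ˢ C).filter
        (fun p => σ₁ * p.1 + σ₂ * p.2.1 + σ₃ * p.2.2 = 0)).card : ℝ)) ≤
      (C.card : ℝ) ^ ((3:ℝ)/4) *
        (d4plus A * (A.card : ℝ) * (B.card : ℝ) ^ 3) ^ ((1:ℝ)/4) :=
  stmt12_general A B C σ₁ σ₂ σ₃ h1 h2 h3
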